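/- Let S be an N×N Hermitian positive semidefinite complex matrix with eigenvalues λ_1(S) ≥ λ_2(S) ≥ … ≥ λ_N(S) listed in decreasing order with multiplicity, let 1 ≤ M ≤ N, and let c > 0 be real. If F* ∈ ℂ^{N×M} has as its columns orthonormal eigenvectors of S associated with the M largest eigenvalues λ_1(S), …, λ_M(S), then Tr(F*ᴴSF* (c·F*ᴴSF* + I_M)⁻¹) = Σ_{i=1}^M λ_i(S)/(c·λ_i(S) + 1); consequently F* maximizes Tr(FᴴSF (c·FᴴSF + I_M)⁻¹) over all semi-orthogonal F ∈ ℂ^{N×M} (i.e., all F with FᴴF = I_M). -/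

import Mathlib

/-! With `g x = x / (c x + 1)`, the trace of `A (c A + 1)⁻¹` is `∑ g (λᵢ(A))`, read off any
orthonormal eigenbasis of `A`. For `A = F*ᴴ S F*` the standard basis is such an eigenbasis, with the
top `M` eigenvalues of `S`. For a semi-orthogonal `F`, Cauchy interlacing `λₖ(Fᴴ S F) ≤ λₖ(S)` and
the monotonicity of `g` on `[0, ∞)` bound the sum termwise. Interlacing is a dimension count: `F`
maps the span of the top `k + 1` eigenvectors of `Fᴴ S F` isometrically onto a subspace meeting
the orthogonal complement of the top `k` eigenvectors of `S`, and on a common vector the Rayleigh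
quotient is at least `λₖ(Fᴴ S F)` and at most `λₖ(S)`. -/

open Matrix
open scoped ComplexOrder InnerProductSpace

namespace Orthonormal

variable {𝕜 E ι : Type*} [RCLike 𝕜] [NormedAddCommGroup E] [InnerProductSpace 𝕜 E] [Fintype ι]
  {w : ι → E} (hw : Orthonormal 𝕜 w) (c : ι → 𝕜)
include hw

lemma norm_sum_smul_sq : ‖∑ i, c i • w i‖ ^ 2 = ∑ i, ‖c i‖ ^ 2 := by
  rw [@norm_sq_eq_re_inner 𝕜, hw.inner_sum, map_sum]
  simp [RCLike.conj_mul]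

variable {T : E →ₗ[𝕜] E} {μ : ι → ℝ} (hT : ∀ i, T (w i) = (μ i : 𝕜) • w i)
include hT

lemma re_inner_sum_smul_apply :
    RCLike.re ⟪∑ i, c i • w i, T (∑ i, c i • w i)⟫_𝕜 = ∑ i, μ i * ‖c i‖ ^ 2 := by
  have hTsum : T (∑ i, c i • w i) = ∑ i, (μ i * c i) • w i := by
    simp only [map_sum, map_smul, hT, smul_smul, mul_comm]
  rw [hTsum, hw.inner_sum, map_sum]
  refine Finset.sum_congr rfl fun i _ => ?_
  rw [mul_left_comm, RCLike.conj_mul]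
  norm_cast

lemma re_inner_sum_smul_apply_le (a : ℝ) (h : ∀ i, c i ≠ 0 → μ i ≤ a) :
    RCLike.re ⟪∑ i, c i • w i, T (∑ i, c i • w i)⟫_𝕜 ≤ a * ‖∑ i, c i • w i‖ ^ 2 := by
  rw [hw.re_inner_sum_smul_apply c hT, hw.norm_sum_smul_sq, Finset.mul_sum]
  refine Finset.sum_le_sum fun i _ => ?_
  by_cases hc : c i = 0
  · simp [hc]
  · exact mul_le_mul_of_nonneg_right (h i hc) (sq_nonneg _)

lemma le_re_inner_sum_smul_apply (a : ℝ) (h : ∀ i, c i ≠ 0 → a ≤ μ i) :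
    a * ‖∑ i, c i • w i‖ ^ 2 ≤ RCLike.re ⟪∑ i, c i • w i, T (∑ i, c i • w i)⟫_𝕜 := by
  rw [hw.re_inner_sum_smul_apply c hT, hw.norm_sum_smul_sq, Finset.mul_sum]
  refine Finset.sum_le_sum fun i _ => ?_
  by_cases hc : c i = 0
  · simp [hc]
  · exact mul_le_mul_of_nonneg_right (h i hc) (sq_nonneg _)

end Orthonormal

variable {𝕜 E E' : Type*} [RCLike 𝕜] [NormedAddCommGroup E] [InnerProductSpace 𝕜 E]
  [NormedAddCommGroup E'] [InnerProductSpace 𝕜 E']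

theorem eigenvalue_le_of_isometric_compression {m n : ℕ} {T : E →ₗ[𝕜] E} {T' : E' →ₗ[𝕜] E'}
    {F : E' →ₗ[𝕜] E} (hF : ∀ y, ‖F y‖ = ‖y‖) (hT' : ∀ y, ⟪F y, T (F y)⟫_𝕜 = ⟪y, T' y⟫_𝕜)
    (u : OrthonormalBasis (Fin n) 𝕜 E) {μ : Fin n → ℝ} (hμ : Antitone μ)
    (hu : ∀ i, T (u i) = (μ i : 𝕜) • u i)
    {v : Fin m → E'} (hv : Orthonormal 𝕜 v) {ν : Fin m → ℝ} (hν : Antitone ν)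
    (hv' : ∀ j, T' (v j) = (ν j : 𝕜) • v j) {k : ℕ} (hkm : k < m) (hkn : k < n) :
    ν ⟨k, hkm⟩ ≤ μ ⟨k, hkn⟩ := by
  set w : Fin (k + 1) → E' := v ∘ Fin.castLE hkm
  have hw : Orthonormal 𝕜 w := hv.comp _ (Fin.castLE_injective hkm)
  -- a nonzero combination of `v 0, …, v k` whose image is orthogonal to `u 0, …, u (k - 1)`
  let L : (Fin (k + 1) → 𝕜) →ₗ[𝕜] (Fin k → 𝕜) :=
    LinearMap.pi fun i => innerₛₗ 𝕜 (u (Fin.castLE hkn.le i)) ∘ₗ F ∘ₗ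
      Fintype.linearCombination 𝕜 w
  obtain ⟨c, hcL, hc0⟩ := Submodule.exists_mem_ne_zero_of_ne_bot
    (LinearMap.ker_ne_bot_of_finrank_lt (f := L) (by simp))
  set y := ∑ j, c j • w j
  have hy : 0 < ‖y‖ ^ 2 := by
    obtain ⟨j, hj⟩ := Function.ne_iff.mp hc0
    rw [hw.norm_sum_smul_sq]
    exact Finset.sum_pos' (fun _ _ => sq_nonneg _) ⟨j, Finset.mem_univ _, by positivity⟩
  have hlow : ν ⟨k, hkm⟩ * ‖y‖ ^ 2 ≤ RCLike.re ⟪y, T' y⟫_𝕜 :=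
    hw.le_re_inner_sum_smul_apply c (fun j => hv' _) _
      fun j _ => hν (Fin.mk_le_mk.mpr (Nat.lt_succ_iff.mp j.isLt))
  have hup : RCLike.re ⟪F y, T (F y)⟫_𝕜 ≤ μ ⟨k, hkn⟩ * ‖F y‖ ^ 2 := by
    rw [← u.sum_repr' (F y)]
    refine u.orthonormal.re_inner_sum_smul_apply_le _ hu _ fun i hi => hμ ?_
    by_contra! hik
    exact hi (congrFun (LinearMap.mem_ker.mp hcL) ⟨i, hik⟩)
  rw [hT', hF] at hup
  exact le_of_mul_le_mul_right (hlow.trans hup) hy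

namespace Matrix

lemma conjTranspose_mul_mul_mulVec_single {R m n : Type*} [CommRing R] [StarRing R] [Fintype m]
    [DecidableEq m] [Fintype n] {S : Matrix n n R} {F : Matrix n m R} (hF : Fᴴ * F = 1) {j : m}
    {a : R} (hj : S *ᵥ (fun i => F i j) = a • fun i => F i j) :
    (Fᴴ * S * F) *ᵥ Pi.single j 1 = a • Pi.single j 1 := by
  have hcol : F *ᵥ Pi.single j 1 = fun i => F i j := F.mulVec_single_one j
  rw [← mulVec_mulVec, hcol, ← mulVec_mulVec, hj, mulVec_smul, ← hcol, mulVec_mulVec, hF,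
    one_mulVec]

section Field

variable {K ι : Type*} [Field K] [Fintype ι] [DecidableEq ι]

lemma mul_inv_smul_add_one_mulVec {A : Matrix ι ι K} {c a : K} (hA : IsUnit (c • A + 1))
    {x : ι → K} (hx : A *ᵥ x = a • x) : (A * (c • A + 1)⁻¹) *ᵥ x = (a / (c * a + 1)) • x := by
  have hBx : (c • A + 1) *ᵥ x = (c * a + 1) • x := by
    rw [add_mulVec, smul_mulVec, hx, one_mulVec, smul_smul, add_smul, one_smul]
  have hx' : (c * a + 1) • ((c • A + 1)⁻¹ *ᵥ x) = x := by
    rw [← mulVec_smul, ← hBx, mulVec_mulVec,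
      nonsing_inv_mul _ ((isUnit_iff_isUnit_det _).mp hA), one_mulVec]
  have hinv : (c • A + 1)⁻¹ *ᵥ x = (c * a + 1)⁻¹ • x := by
    rcases eq_or_ne (c * a + 1) 0 with h | h
    · rw [h, zero_smul] at hx'
      simp [← hx']
    · exact (eq_inv_smul_iff₀ h).mpr hx'
  rw [← mulVec_mulVec, hinv, mulVec_smul, hx, smul_smul, div_eq_inv_mul]

end Field

variable {𝕜 ι : Type*} [RCLike 𝕜] [Fintype ι] [DecidableEq ι]

lemma trace_eq_sum_of_mulVec_eq_smul {X : Matrix ι ι 𝕜}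
    (b : OrthonormalBasis ι 𝕜 (EuclideanSpace 𝕜 ι)) {ev : ι → 𝕜}
    (hb : ∀ i, X *ᵥ b i = ev i • b i) : X.trace = ∑ i, ev i := by
  rw [← trace_toLin_eq X (PiLp.basisFun 2 𝕜 ι), ← toLpLin_eq_toLin,
    LinearMap.trace_eq_sum_inner _ b]
  refine Finset.sum_congr rfl fun i _ => ?_
  rw [toLpLin_apply, hb, WithLp.toLp_smul, inner_smul_right,
    inner_self_eq_one_of_norm_eq_one (b.norm_eq_one i), mul_one]

lemma PosSemidef.isUnit_smul_add_one {A : Matrix ι ι 𝕜} (hA : A.PosSemidef) {c : ℝ} (hc : 0 ≤ c) :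
    IsUnit ((c : 𝕜) • A + 1) :=
  (PosDef.posSemidef_add (hA.smul (RCLike.ofReal_nonneg.mpr hc)) PosDef.one).isUnit

lemma PosSemidef.trace_mul_inv_smul_add_one {A : Matrix ι ι 𝕜} (hA : A.PosSemidef) {c : ℝ}
    (hc : 0 ≤ c) (b : OrthonormalBasis ι 𝕜 (EuclideanSpace 𝕜 ι)) {ev : ι → ℝ}
    (hb : ∀ i, A *ᵥ b i = (ev i : 𝕜) • b i) :
    (A * ((c : 𝕜) • A + 1)⁻¹).trace = ((∑ i, ev i / (c * ev i + 1) : ℝ) : 𝕜) := by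
  push_cast
  exact trace_eq_sum_of_mulVec_eq_smul b
    fun i => mul_inv_smul_add_one_mulVec (hA.isUnit_smul_add_one hc) (hb i)

theorem eigenvalue_le_of_conjTranspose_mul_mul {m n : ℕ} {S : Matrix (Fin n) (Fin n) 𝕜}
    {F : Matrix (Fin n) (Fin m) 𝕜} (hF : Fᴴ * F = 1)
    (u : OrthonormalBasis (Fin n) 𝕜 (EuclideanSpace 𝕜 (Fin n))) {μ : Fin n → ℝ} (hμ : Antitone μ)
    (hu : ∀ i, S *ᵥ u i = (μ i : 𝕜) • u i)
    {v : Fin m → EuclideanSpace 𝕜 (Fin m)} (hv : Orthonormal 𝕜 v) {ν : Fin m → ℝ}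
    (hν : Antitone ν) (hv' : ∀ j, (Fᴴ * S * F) *ᵥ v j = (ν j : 𝕜) • v j)
    {k : ℕ} (hkm : k < m) (hkn : k < n) : ν ⟨k, hkm⟩ ≤ μ ⟨k, hkn⟩ := by
  have hadj : ∀ y z, ⟪toEuclideanLin F y, z⟫_𝕜 = ⟪y, toEuclideanLin Fᴴ z⟫_𝕜 := by
    intro y z
    rw [toEuclideanLin_conjTranspose_eq_adjoint, LinearMap.adjoint_inner_right]
  refine eigenvalue_le_of_isometric_compression (T := toEuclideanLin S)
    (T' := toEuclideanLin (Fᴴ * S * F)) (F := toEuclideanLin F) (fun y => ?_) (fun y => ?_)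
    u hμ (fun i => ?_) hv hν (fun j => ?_) hkm hkn
  · rw [@norm_eq_sqrt_re_inner 𝕜, @norm_eq_sqrt_re_inner 𝕜 _ _ _ _ y, hadj, ← LinearMap.comp_apply,
      ← toLpLin_mul, hF, toLpLin_one, LinearMap.id_apply]
  · rw [hadj, ← LinearMap.comp_apply, ← LinearMap.comp_apply, ← toLpLin_mul, ← toLpLin_mul,
      Matrix.mul_assoc]
  · rw [toLpLin_apply, hu, WithLp.toLp_smul, WithLp.toLp_ofLp]
  · rw [toLpLin_apply, hv', WithLp.toLp_smul, WithLp.toLp_ofLp]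

end Matrix

lemma monotoneOn_div_mul_add_one {c : ℝ} (hc : 0 ≤ c) :
    MonotoneOn (fun x => x / (c * x + 1)) (Set.Ici 0) := by
  intro x (hx : 0 ≤ x) y (hy : 0 ≤ y) hxy
  rw [div_le_div_iff₀ (by positivity) (by positivity)]
  nlinarith

theorem stmt7_general (N M : ℕ) (hMN : M ≤ N)
    (S : Matrix (Fin N) (Fin N) ℂ) (hS : S.PosSemidef)
    (μ : Fin N → ℝ) (hμdec : ∀ i j : Fin N, i ≤ j → μ j ≤ μ i)
    (hμ : ∃ σ : Equiv.Perm (Fin N), μ = hS.1.eigenvalues ∘ σ)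
    (Fstar : Matrix (Fin N) (Fin M) ℂ) (hFo : Fstarᴴ * Fstar = 1)
    (hFeig : ∀ j : Fin M,
      S *ᵥ (fun i => Fstar i j) = (μ (Fin.castLE hMN j) : ℂ) • (fun i => Fstar i j))
    (c : ℝ) (hc : 0 < c) :
    Matrix.trace ((Fstarᴴ * S * Fstar) * ((c : ℂ) • (Fstarᴴ * S * Fstar) + 1)⁻¹)
      = ((∑ i : Fin M, μ (Fin.castLE hMN i) / (c * μ (Fin.castLE hMN i) + 1) : ℝ) : ℂ) ∧
    ∀ F : Matrix (Fin N) (Fin M) ℂ, Fᴴ * F = 1 →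
      ∃ r : ℝ,
        Matrix.trace ((Fᴴ * S * F) * ((c : ℂ) • (Fᴴ * S * F) + 1)⁻¹) = (r : ℂ) ∧
        r ≤ ∑ i : Fin M, μ (Fin.castLE hMN i) / (c * μ (Fin.castLE hMN i) + 1) := by
  obtain ⟨σ, rfl⟩ := hμ
  refine ⟨(hS.conjTranspose_mul_mul_same Fstar).trace_mul_inv_smul_add_one hc.le
    (EuclideanSpace.basisFun _ ℂ) fun j => ?_, fun F hF => ?_⟩
  · simpa using conjTranspose_mul_mul_mulVec_single hFo (hFeig j)
  set u := hS.1.eigenvectorBasis.reindex σ.symm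
  have hu : ∀ i, S *ᵥ u i = ((hS.1.eigenvalues ∘ σ) i : ℂ) • u i := fun i => by
    simpa [u, RCLike.real_smul_eq_coe_smul] using hS.1.mulVec_eigenvectorBasis (σ i)
  have hA := isPositive_toEuclideanLin_iff.mpr (hS.conjTranspose_mul_mul_same F)
  have hn : Module.finrank ℂ (EuclideanSpace ℂ (Fin M)) = M := finrank_euclideanSpace_fin
  set v := hA.isSymmetric.eigenvectorBasis hn
  set ν := hA.isSymmetric.eigenvalues hn
  have hv : ∀ j, (Fᴴ * S * F) *ᵥ v j = (ν j : ℂ) • v j := fun j =>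
    congrArg WithLp.ofLp (hA.isSymmetric.apply_eigenvectorBasis hn j)
  refine ⟨∑ j, ν j / (c * ν j + 1),
    (hS.conjTranspose_mul_mul_same F).trace_mul_inv_smul_add_one hc.le v hv,
    Finset.sum_le_sum fun j _ => monotoneOn_div_mul_add_one hc.le (hA.nonneg_eigenvalues hn j)
      (hS.eigenvalues_nonneg _) ?_⟩
  exact eigenvalue_le_of_conjTranspose_mul_mul hF u (fun i j hij => hμdec i j hij) hu
    v.orthonormal (hA.isSymmetric.eigenvalues_antitone hn) hv j.isLt (j.isLt.trans_le hMN)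

/-- optimality of the top-`M` eigenvector beamformer,
Remark 1.  Let `S` be an `N×N` Hermitian positive semidefinite complex matrix
whose eigenvalues, listed in decreasing order with multiplicity, are given by
the decreasing rearrangement `μ`.  If the columns of `F* ∈ ℂ^{N×M}` are
orthonormal eigenvectors of `S` associated with the `M` largest eigenvalues
`μ 0, …, μ (M-1)`, then
`Tr(F*ᴴSF* (c F*ᴴSF* + I)⁻¹) = Σ_{i<M} μ i / (c μ i + 1)`, and consequently
`F*` maximizes `Tr(FᴴSF (c FᴴSF + I)⁻¹)` over all semi-orthogonal
`F ∈ ℂ^{N×M}`. -/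
theorem stmt7 (N M : ℕ) (hM : 1 ≤ M) (hMN : M ≤ N)
    (S : Matrix (Fin N) (Fin N) ℂ) (hS : S.PosSemidef)
    (μ : Fin N → ℝ) (hμdec : ∀ i j : Fin N, i ≤ j → μ j ≤ μ i)
    (hμ : ∃ σ : Equiv.Perm (Fin N), μ = hS.1.eigenvalues ∘ σ)
    (Fstar : Matrix (Fin N) (Fin M) ℂ) (hFo : Fstarᴴ * Fstar = 1)
    (hFeig : ∀ j : Fin M,
      S *ᵥ (fun i => Fstar i j) = (μ (Fin.castLE hMN j) : ℂ) • (fun i => Fstar i j))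
    (c : ℝ) (hc : 0 < c) :
    Matrix.trace ((Fstarᴴ * S * Fstar) * ((c : ℂ) • (Fstarᴴ * S * Fstar) + 1)⁻¹)
      = ((∑ i : Fin M, μ (Fin.castLE hMN i) / (c * μ (Fin.castLE hMN i) + 1) : ℝ) : ℂ) ∧
    ∀ F : Matrix (Fin N) (Fin M) ℂ, Fᴴ * F = 1 →
      ∃ r : ℝ,
        Matrix.trace ((Fᴴ * S * F) * ((c : ℂ) • (Fᴴ * S * F) + 1)⁻¹) = (r : ℂ) ∧
        r ≤ ∑ i : Fin M, μ (Fin.castLE hMN i) / (c * μ (Fin.castLE hMN i) + 1) :=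
  stmt7_general N M hMN S hS μ hμdec hμ Fstar hFo hFeig c hc
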